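/- For every k ≥ 2, the set of bimatrix games of size (k)×(k) whose correlated equilibrium polytope has exactly k extreme points is not open: there exists a bimatrix game G whose set of correlated equilibria has exactly k extreme points such that every neighborhood of G (within games of the same size) contains a game whose set of correlated equilibria has strictly more than k extreme points. In particular, for k = 3 a witness is the 3×3 game with payoffs (row, column) given by [[(0,0),(−1,−1),(−1,0)],[(−1,−1),(0,0),(−1,0)],[(0,−1),(0,−1),(0,0)]], whose extreme correlated equilibria are exactly the three pure diagonal profiles, while for every sufficiently small ε > 0 the game obtained by replacing the payoffs of the middle diagonal cell by (ε,ε) has at least four extreme correlated equilibria. -/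

import Mathlib

/-- A bimatrix game of size `k × k`: the pair of payoff matrices (row player, column player).
The space of such games carries the (product, i.e. Euclidean) topology. -/
abbrev BiGame (k : ℕ) : Type := (Fin k → Fin k → ℝ) × (Fin k → Fin k → ℝ)

/-- The Dirac (pure) mixed strategy concentrated on `a`. -/
def pureStrat {k : ℕ} (a : Fin k) : Fin k → ℝ := fun b => if b = a then 1 else 0

/-- A mixed strategy: a probability distribution on the strategy set. -/
def IsMixed {k : ℕ} (x : Fin k → ℝ) : Prop := (∀ a, 0 ≤ x a) ∧ ∑ a, x a = 1

/-- Bilinear extension of a payoff matrix to mixed strategies. -/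
def pay {k : ℕ} (U : Fin k → Fin k → ℝ) (x y : Fin k → ℝ) : ℝ :=
  ∑ a, ∑ b, x a * y b * U a b

/-- Nash equilibrium of a bimatrix game: a pair of mixed strategies such that no player can
gain by a unilateral pure deviation. -/
def IsNash2 {k : ℕ} (G : BiGame k) (σ : (Fin k → ℝ) × (Fin k → ℝ)) : Prop :=
  IsMixed σ.1 ∧ IsMixed σ.2 ∧
    (∀ a, pay G.1 (pureStrat a) σ.2 ≤ pay G.1 σ.1 σ.2) ∧
    (∀ b, pay G.2 σ.1 (pureStrat b) ≤ pay G.2 σ.1 σ.2)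

/-- The witness `3 × 3` game, with the middle diagonal cell's payoffs replaced by `(ε, ε)`;
the payoffs (row, column) of the game are
`[[(0,0),(−1,−1),(−1,0)],[(−1,−1),(ε,ε),(−1,0)],[(0,−1),(0,−1),(0,0)]]`. -/
noncomputable def G3e (ε : ℝ) : BiGame 3 :=
  (![![0, -1, -1], ![-1, ε, -1], ![0, 0, 0]],
   ![![0, -1, 0], ![-1, ε, 0], ![-1, -1, 0]])

/-- Correlated equilibrium of a `k × k` bimatrix game: a probability distribution on pure
strategy profiles satisfying all incentive constraints. -/
def IsCE2 {k : ℕ} (G : BiGame k) (μ : Fin k × Fin k → ℝ) : Prop :=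
  (∀ s, 0 ≤ μ s) ∧ (∑ s, μ s = 1) ∧
    (∀ a a' : Fin k, 0 ≤ ∑ b, μ (a, b) * (G.1 a b - G.1 a' b)) ∧
    (∀ b b' : Fin k, 0 ≤ ∑ a, μ (a, b) * (G.2 a b - G.2 a b'))

/-- The Dirac distribution on the pure strategy profile `s`. -/
def dirac {k : ℕ} (s : Fin k × Fin k) : Fin k × Fin k → ℝ := fun t => if t = s then 1 else 0

/-- The set of correlated equilibria of `G` has exactly `j` extreme points. -/
def HasExactlyExtremeCE {k : ℕ} (G : BiGame k) (j : ℕ) : Prop :=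
  ∃ E : Finset (Fin k × Fin k → ℝ), E.card = j ∧
    (E : Set (Fin k × Fin k → ℝ)) = Set.extremePoints ℝ {μ | IsCE2 G μ}

/- ### auxiliary development -/

section Aux

open Finset

lemma dirac_nonneg {k : ℕ} (s t : Fin k × Fin k) : 0 ≤ dirac s t := by
  unfold dirac; split <;> norm_num

lemma dirac_sum {k : ℕ} (s : Fin k × Fin k) : ∑ t, dirac s t = 1 := by
  simp [dirac, Finset.sum_ite_eq']

lemma dirac_injective {k : ℕ} : Function.Injective (dirac (k := k)) := by
  intro s t h
  by_contra hst
  have := congrFun h s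
  simp [dirac, hst] at this

lemma sum_of_zeros {ι : Type*} [Fintype ι] [DecidableEq ι] (μ : ι → ℝ) (s : ι)
    (h : ∀ t, t ≠ s → μ t = 0) : ∑ t, μ t = μ s :=
  Finset.sum_eq_single s (fun t _ ht => h t ht) (by simp)

lemma sum_two {ι : Type*} [Fintype ι] [DecidableEq ι] (f : ι → ℝ) (p q : ι) (hpq : p ≠ q)
    (hz : ∀ b, b ≠ p → b ≠ q → f b = 0) : ∑ b, f b = f p + f q := by
  rw [← Finset.sum_pair hpq]
  refine (Finset.sum_subset (Finset.subset_univ _) ?_).symm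
  intro x _ hx
  simp only [Finset.mem_insert, Finset.mem_singleton] at hx
  push_neg at hx
  exact hz x hx.1 hx.2

lemma sum_four {ι : Type*} [Fintype ι] [DecidableEq ι] (f : ι → ℝ) (p q r t : ι)
    (h1 : p ≠ q) (h2 : p ≠ r) (h3 : p ≠ t) (h4 : q ≠ r) (h5 : q ≠ t) (h6 : r ≠ t)
    (hz : ∀ b, b ≠ p → b ≠ q → b ≠ r → b ≠ t → f b = 0) :
    ∑ b, f b = f p + f q + f r + f t := by
  have : ∑ b ∈ ({p, q, r, t} : Finset ι), f b = f p + (f q + (f r + f t)) := by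
    rw [Finset.sum_insert (by simp [h1, h2, h3]), Finset.sum_insert (by simp [h4, h5]),
      Finset.sum_insert (by simp [h6]), Finset.sum_singleton]
  have hsub : ∑ b ∈ ({p, q, r, t} : Finset ι), f b = ∑ b, f b := by
    refine Finset.sum_subset (Finset.subset_univ _) ?_
    intro x _ hx
    simp only [Finset.mem_insert, Finset.mem_singleton] at hx
    push_neg at hx
    exact hz x hx.1 hx.2.1 hx.2.2.1 hx.2.2.2
  rw [← hsub, this]; ring

/-- a Dirac measure is an extreme point of any set of probability vectors containing it. -/
lemma dirac_extreme_of {k : ℕ} (S : Set (Fin k × Fin k → ℝ)) (s : Fin k × Fin k)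
    (hS : ∀ μ ∈ S, (∀ t, 0 ≤ μ t) ∧ ∑ t, μ t = 1) (hd : dirac s ∈ S) :
    dirac s ∈ Set.extremePoints ℝ S := by
  refine ⟨hd, ?_⟩
  intro μ₁ h₁ μ₂ h₂ hseg
  obtain ⟨a, b, ha, hb, hab, H⟩ := hseg
  have Hpt : ∀ t, a * μ₁ t + b * μ₂ t = dirac s t := by
    intro t
    have := congrFun H t
    simpa using this
  have hz : ∀ t, t ≠ s → μ₁ t = 0 ∧ μ₂ t = 0 := by
    intro t ht
    have h0 : a * μ₁ t + b * μ₂ t = 0 := by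
      rw [Hpt t]; unfold dirac; rw [if_neg ht]
    have n1 := (hS μ₁ h₁).1 t
    have n2 := (hS μ₂ h₂).1 t
    constructor <;> nlinarith
  have key : ∀ μ' , μ' ∈ S → (∀ t, t ≠ s → μ' t = 0) → μ' = dirac s := by
    intro μ' hμ' hz'
    funext t
    by_cases ht : t = s
    · subst ht
      have hsum := (hS μ' hμ').2
      rw [sum_of_zeros μ' t hz'] at hsum
      simp [dirac, hsum]
    · simp [dirac, ht, hz' t ht]
  exact key μ₁ h₁ (fun t ht => (hz t ht).1)

/- ### the family of games -/

noncomputable def Amat (n : ℕ) (ε : ℝ) (j : Fin (n+2)) : Fin (n+2) → Fin (n+2) → ℝ :=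
  fun a b => if a = Fin.last (n+1) then 0 else if b = a then (if a = j then ε else 0) else -1

noncomputable def Gk (n : ℕ) (ε : ℝ) (j : Fin (n+2)) : BiGame (n+2) :=
  (Amat n ε j, fun a b => Amat n ε j b a)

variable {n : ℕ} {ε : ℝ} {j : Fin (n+2)}

lemma Amat_last (b : Fin (n+2)) : Amat n ε j (Fin.last (n+1)) b = 0 := if_pos rfl

lemma Amat_jj (hj : j ≠ Fin.last (n+1)) : Amat n ε j j j = ε := by
  simp [Amat, hj]

lemma Amat_off (a b : Fin (n+2)) (ha : a ≠ Fin.last (n+1)) (hba : b ≠ a) :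
    Amat n ε j a b = -1 := by
  simp [Amat, ha, hba]

lemma Amat_diag_nonneg (hε : 0 ≤ ε) (a : Fin (n+2)) : 0 ≤ Amat n ε j a a := by
  unfold Amat
  split_ifs with h1 h2 h3
  · norm_num
  · exact hε
  · norm_num
  · exact absurd rfl h2

lemma Amat_le_diag (hε : 0 ≤ ε) (a a' : Fin (n+2)) :
    Amat n ε j a' a ≤ Amat n ε j a a := by
  by_cases h : a' = a
  · subst h; exact le_refl _
  · have h1 : Amat n ε j a' a ≤ 0 := by
      unfold Amat
      split_ifs with h1 h2 h3
      · exact le_refl _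
      · exact absurd h2.symm h
      · exact absurd h2.symm h
      · norm_num
    exact h1.trans (Amat_diag_nonneg hε a)

/-- every diagonal probability distribution is a correlated equilibrium. -/
lemma diag_ce (hε : 0 ≤ ε) (μ : Fin (n+2) × Fin (n+2) → ℝ)
    (h0 : ∀ s, 0 ≤ μ s) (h1 : ∑ s, μ s = 1) (hdiag : ∀ a b : Fin (n+2), a ≠ b → μ (a, b) = 0) :
    IsCE2 (Gk n ε j) μ := by
  refine ⟨h0, h1, ?_, ?_⟩
  · intro a a'
    have hs : ∑ b, μ (a, b) * ((Gk n ε j).1 a b - (Gk n ε j).1 a' b)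
        = μ (a, a) * (Amat n ε j a a - Amat n ε j a' a) := by
      refine Finset.sum_eq_single a (fun b _ hb => ?_) (by simp)
      rw [hdiag a b (Ne.symm hb), zero_mul]
    rw [hs]
    exact mul_nonneg (h0 _) (sub_nonneg.mpr (Amat_le_diag hε a a'))
  · intro b b'
    have hs : ∑ a, μ (a, b) * ((Gk n ε j).2 a b - (Gk n ε j).2 a b')
        = μ (b, b) * (Amat n ε j b b - Amat n ε j b' b) := by
      refine Finset.sum_eq_single b (fun a _ ha => ?_) (by simp)
      rw [hdiag a b ha, zero_mul]
    rw [hs]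
    exact mul_nonneg (h0 _) (sub_nonneg.mpr (Amat_le_diag hε b b'))

lemma dirac_diag_facts (i : Fin (n+2)) :
    (∀ s, 0 ≤ dirac (i, i) s) ∧ (∑ s, dirac (i, i) s = 1) ∧
      (∀ a b : Fin (n+2), a ≠ b → dirac (i, i) (a, b) = 0) := by
  refine ⟨dirac_nonneg _, dirac_sum _, fun a b hab => ?_⟩
  unfold dirac
  rw [if_neg]
  intro h
  rw [Prod.ext_iff] at h
  exact hab (h.1.trans h.2.symm)

lemma dirac_diag_extreme (hε : 0 ≤ ε) (i : Fin (n+2)) :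
    dirac (i, i) ∈ Set.extremePoints ℝ {μ | IsCE2 (Gk n ε j) μ} := by
  obtain ⟨d0, d1, d2⟩ := dirac_diag_facts (n := n) i
  exact dirac_extreme_of _ _ (fun μ hμ => ⟨hμ.1, hμ.2.1⟩) (diag_ce hε _ d0 d1 d2)

end Aux

section Aux2
open Finset
variable {n : ℕ} {ε : ℝ} {j : Fin (n+2)}

lemma force_zero (j : Fin (n+2)) (f : Fin (n+2) → ℝ) (a : Fin (n+2)) (ha : a ≠ Fin.last (n+1))
    (h0 : ∀ c, 0 ≤ f c)
    (H : 0 ≤ ∑ c, f c * (Amat n 0 j a c - Amat n 0 j (Fin.last (n+1)) c)) :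
    ∀ c, c ≠ a → f c = 0 := by
  have hterm : ∀ c : Fin (n+2), f c * (Amat n 0 j a c - Amat n 0 j (Fin.last (n+1)) c) ≤ 0 := by
    intro c
    have hfac : Amat n 0 j a c - Amat n 0 j (Fin.last (n+1)) c ≤ 0 := by
      rw [Amat_last, sub_zero]
      unfold Amat
      rw [if_neg ha]
      split_ifs <;> norm_num
    exact mul_nonpos_iff.mpr (Or.inl ⟨h0 c, hfac⟩)
  have hzero : ∀ c ∈ Finset.univ, f c * (Amat n 0 j a c - Amat n 0 j (Fin.last (n+1)) c) = 0 :=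
    (Finset.sum_eq_zero_iff_of_nonpos (fun c _ => hterm c)).1
      (le_antisymm (Finset.sum_nonpos (fun c _ => hterm c)) H)
  intro c hc
  have h := hzero c (Finset.mem_univ c)
  rw [Amat_last, sub_zero, Amat_off a c ha hc] at h
  linarith

lemma ce0_offdiag (μ : Fin (n+2) × Fin (n+2) → ℝ) (h : IsCE2 (Gk n 0 j) μ) :
    ∀ a b : Fin (n+2), a ≠ b → μ (a, b) = 0 := by
  obtain ⟨h0, h1, hr, hc⟩ := h
  simp only [Gk] at hr hc
  intro a b hab
  by_cases ha : a = Fin.last (n+1)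
  · subst ha
    have hb : b ≠ Fin.last (n+1) := fun h' => hab h'.symm
    exact force_zero j (fun c => μ (c, b)) b hb (fun c => h0 _)
      (hc b (Fin.last (n+1))) _ hab
  · exact force_zero j (fun c => μ (a, c)) a ha (fun c => h0 _)
      (hr a (Fin.last (n+1))) b (Ne.symm hab)

lemma extreme0 (j : Fin (n+2)) :
    Set.extremePoints ℝ {μ | IsCE2 (Gk n 0 j) μ}
      = Set.range (fun i : Fin (n+2) => dirac (i, i)) := by
  ext μ
  constructor
  · intro hμ
    have hce := hμ.1
    obtain ⟨h0, h1, -, -⟩ := hce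
    have hdiag := ce0_offdiag μ hμ.1
    have hex : ∃ i, 0 < μ (i, i) := by
      by_contra h
      push_neg at h
      have hall : ∀ s : Fin (n+2) × Fin (n+2), μ s = 0 := by
        rintro ⟨a, b⟩
        by_cases hab : a = b
        · subst hab; exact le_antisymm (h a) (h0 _)
        · exact hdiag a b hab
      rw [Finset.sum_eq_zero (fun s _ => hall s)] at h1
      norm_num at h1
    obtain ⟨i, hi⟩ := hex
    have key : ∀ l, l ≠ i → μ (l, l) = 0 := by
      intro l hl
      by_contra hne
      have hlpos : 0 < μ (l, l) := lt_of_le_of_ne (h0 _) (Ne.symm hne)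
      set c := min (μ (i, i)) (μ (l, l)) with hcdef
      have hcpos : 0 < c := lt_min hi hlpos
      set d : Fin (n+2) × Fin (n+2) → ℝ :=
        fun s => c * dirac (i, i) s - c * dirac (l, l) s with hd
      have hil : ((i, i) : Fin (n+2) × Fin (n+2)) ≠ (l, l) := by
        intro h'; exact hl ((Prod.ext_iff.mp h').1).symm
      have hdii : d (i, i) = c := by simp [hd, dirac, hil]
      have hdll : d (l, l) = -c := by simp [hd, dirac, hil.symm]
      have hdother : ∀ s, s ≠ (i, i) → s ≠ (l, l) → d s = 0 := by
        intro s hs1 hs2; simp [hd, dirac, hs1, hs2]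
      have hdsum : ∑ s, d s = 0 := by
        simp [hd, Finset.sum_sub_distrib, ← Finset.mul_sum, dirac_sum]
      have hddiag : ∀ a b : Fin (n+2), a ≠ b → d (a, b) = 0 := by
        intro a b hab
        refine hdother _ ?_ ?_ <;> simp [Prod.ext_iff] <;> intro h' h'' <;>
          exact hab (h'.trans h''.symm)
      have mem1 : IsCE2 (Gk n 0 j) (μ + d) := by
        refine diag_ce le_rfl _ ?_ (by simp [Finset.sum_add_distrib, h1, hdsum]) ?_
        · intro s
          by_cases hs1 : s = (i, i)
          · subst hs1; simp [hdii]; positivity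
          · by_cases hs2 : s = (l, l)
            · subst hs2
              have : c ≤ μ (l, l) := min_le_right _ _
              simp [hdll]; linarith
            · simp [hdother s hs1 hs2, h0 s]
        · intro a b hab
          simp [hdiag a b hab, hddiag a b hab]
      have mem2 : IsCE2 (Gk n 0 j) (μ - d) := by
        refine diag_ce le_rfl _ ?_ (by simp [Finset.sum_sub_distrib, h1, hdsum]) ?_
        · intro s
          by_cases hs1 : s = (i, i)
          · subst hs1
            have : c ≤ μ (i, i) := min_le_left _ _
            simp [hdii]; linarith
          · by_cases hs2 : s = (l, l)
            · subst hs2; simp [hdll]; positivity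
            · simp [hdother s hs1 hs2, h0 s]
        · intro a b hab
          simp [hdiag a b hab, hddiag a b hab]
      have hseg : μ ∈ openSegment ℝ (μ + d) (μ - d) := by
        refine ⟨1/2, 1/2, by norm_num, by norm_num, by norm_num, ?_⟩
        funext s
        simp only [Pi.add_apply, Pi.sub_apply, Pi.smul_apply, smul_eq_mul]
        ring
      have heq := hμ.2 mem1 mem2 hseg
      have := congrFun heq (i, i)
      simp only [Pi.add_apply] at this
      rw [hdii] at this
      linarith
    have hμi : μ (i, i) = 1 := by
      rw [sum_of_zeros μ (i, i) ?_] at h1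
      · exact h1
      · rintro ⟨a, b⟩ ht
        by_cases hab : a = b
        · subst hab
          refine key a (fun h' => ht ?_)
          rw [h']
        · exact hdiag a b hab
    refine ⟨i, ?_⟩
    funext t
    obtain ⟨a, b⟩ := t
    by_cases ht : ((a, b) : Fin (n+2) × Fin (n+2)) = (i, i)
    · show dirac (i, i) (a, b) = μ (a, b)
      rw [ht]; simp [dirac, hμi]
    · show dirac (i, i) (a, b) = μ (a, b)
      rw [show dirac (i, i) (a, b) = 0 from if_neg ht]
      by_cases hab : a = b
      · subst hab
        exact (key a (fun h' => ht (by rw [h']))).symm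
      · exact (hdiag a b hab).symm
  · rintro ⟨i, rfl⟩
    exact dirac_diag_extreme le_rfl i

end Aux2

section Aux3
open Finset
variable {n : ℕ} {ε : ℝ} {j : Fin (n+2)}

lemma pne {α β : Type*} {a b : α} {c d : β} (h : a ≠ b) : (a, c) ≠ (b, d) :=
  fun h' => h (Prod.ext_iff.mp h').1

lemma pne' {α β : Type*} {a b : α} {c d : β} (h : c ≠ d) : (a, c) ≠ (b, d) :=
  fun h' => h (Prod.ext_iff.mp h').2

noncomputable def mustar (n : ℕ) (ε : ℝ) (j : Fin (n+2)) : Fin (n+2) × Fin (n+2) → ℝ :=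
  fun s => ((1+ε)^2)⁻¹ * (dirac (j, j) s + ε * dirac (j, Fin.last (n+1)) s +
    ε * dirac (Fin.last (n+1), j) s + ε^2 * dirac (Fin.last (n+1), Fin.last (n+1)) s)

lemma mustar_zero (s : Fin (n+2) × Fin (n+2)) (h1 : s ≠ (j, j)) (h2 : s ≠ (j, Fin.last (n+1)))
    (h3 : s ≠ (Fin.last (n+1), j)) (h4 : s ≠ (Fin.last (n+1), Fin.last (n+1))) :
    mustar n ε j s = 0 := by
  simp [mustar, dirac, h1, h2, h3, h4]

lemma mustar_jj (hj : j ≠ Fin.last (n+1)) : mustar n ε j (j, j) = ((1+ε)^2)⁻¹ := by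
  have e2 : ((j, j) : Fin (n+2) × Fin (n+2)) ≠ (j, Fin.last (n+1)) := pne' hj
  have e3 : ((j, j) : Fin (n+2) × Fin (n+2)) ≠ (Fin.last (n+1), j) := pne hj
  have e4 : ((j, j) : Fin (n+2) × Fin (n+2)) ≠ (Fin.last (n+1), Fin.last (n+1)) := pne hj
  simp [mustar, dirac, e2, e3, e4]

lemma mustar_jm (hj : j ≠ Fin.last (n+1)) :
    mustar n ε j (j, Fin.last (n+1)) = ((1+ε)^2)⁻¹ * ε := by
  have e1 : ((j, Fin.last (n+1)) : Fin (n+2) × Fin (n+2)) ≠ (j, j) := pne' (Ne.symm hj)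
  have e3 : ((j, Fin.last (n+1)) : Fin (n+2) × Fin (n+2)) ≠ (Fin.last (n+1), j) := pne hj
  have e4 : ((j, Fin.last (n+1)) : Fin (n+2) × Fin (n+2)) ≠ (Fin.last (n+1), Fin.last (n+1)) :=
    pne hj
  simp [mustar, dirac, e1, e3, e4]

lemma mustar_mj (hj : j ≠ Fin.last (n+1)) :
    mustar n ε j (Fin.last (n+1), j) = ((1+ε)^2)⁻¹ * ε := by
  have e1 : ((Fin.last (n+1), j) : Fin (n+2) × Fin (n+2)) ≠ (j, j) := pne (Ne.symm hj)
  have e2 : ((Fin.last (n+1), j) : Fin (n+2) × Fin (n+2)) ≠ (j, Fin.last (n+1)) :=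
    pne (Ne.symm hj)
  have e4 : ((Fin.last (n+1), j) : Fin (n+2) × Fin (n+2)) ≠ (Fin.last (n+1), Fin.last (n+1)) :=
    pne' hj
  simp [mustar, dirac, e1, e2, e4]

lemma mustar_mm (hj : j ≠ Fin.last (n+1)) :
    mustar n ε j (Fin.last (n+1), Fin.last (n+1)) = ((1+ε)^2)⁻¹ * ε^2 := by
  have e1 : ((Fin.last (n+1), Fin.last (n+1)) : Fin (n+2) × Fin (n+2)) ≠ (j, j) :=
    pne (Ne.symm hj)
  have e2 : ((Fin.last (n+1), Fin.last (n+1)) : Fin (n+2) × Fin (n+2)) ≠ (j, Fin.last (n+1)) :=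
    pne (Ne.symm hj)
  have e3 : ((Fin.last (n+1), Fin.last (n+1)) : Fin (n+2) × Fin (n+2)) ≠ (Fin.last (n+1), j) :=
    pne' (Ne.symm hj)
  simp [mustar, dirac, e1, e2, e3]

lemma mustar_nonneg (hε : 0 ≤ ε) (s : Fin (n+2) × Fin (n+2)) : 0 ≤ mustar n ε j s := by
  unfold mustar
  have hx : (0:ℝ) ≤ ((1+ε)^2)⁻¹ := by positivity
  refine mul_nonneg hx ?_
  have d1 := dirac_nonneg (j, j) s
  have d2 := dirac_nonneg (j, Fin.last (n+1)) s
  have d3 := dirac_nonneg (Fin.last (n+1), j) s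
  have d4 := dirac_nonneg (Fin.last (n+1), Fin.last (n+1)) s
  have := mul_nonneg hε d2
  have := mul_nonneg hε d3
  have := mul_nonneg (pow_nonneg hε 2) d4
  linarith

lemma mustar_sum (hε : 0 ≤ ε) : ∑ s, mustar n ε j s = 1 := by
  unfold mustar
  rw [← Finset.mul_sum]
  rw [Finset.sum_add_distrib, Finset.sum_add_distrib, Finset.sum_add_distrib,
    ← Finset.mul_sum, ← Finset.mul_sum, ← Finset.mul_sum,
    dirac_sum, dirac_sum, dirac_sum, dirac_sum]
  have h1e : (1:ℝ) + ε ≠ 0 := by positivity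
  field_simp
  ring

lemma mustar_row_sum (hj : j ≠ Fin.last (n+1)) (a : Fin (n+2)) (c : Fin (n+2) → ℝ) :
    ∑ b, mustar n ε j (a, b) * c b =
      ((1+ε)^2)⁻¹ * ((if a = j then c j + ε * c (Fin.last (n+1)) else 0) +
        (if a = Fin.last (n+1) then ε * c j + ε^2 * c (Fin.last (n+1)) else 0)) := by
  by_cases haj : a = j
  · rw [haj]
    rw [sum_two (fun b => mustar n ε j (j, b) * c b) j (Fin.last (n+1)) hj
      (fun b h1 h2 => by
        show mustar n ε j (j, b) * c b = 0
        rw [mustar_zero (j, b) (pne' h1) (pne' h2) (pne hj) (pne hj), zero_mul])]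
    show mustar n ε j (j, j) * c j + mustar n ε j (j, Fin.last (n+1)) * c (Fin.last (n+1)) = _
    rw [mustar_jj hj, mustar_jm hj, if_pos rfl, if_neg hj]
    ring
  · by_cases ham : a = Fin.last (n+1)
    · rw [ham]
      rw [sum_two (fun b => mustar n ε j (Fin.last (n+1), b) * c b) j (Fin.last (n+1)) hj
        (fun b h1 h2 => by
          show mustar n ε j (Fin.last (n+1), b) * c b = 0
          rw [mustar_zero (Fin.last (n+1), b) (pne (Ne.symm hj)) (pne (Ne.symm hj))
            (pne' h1) (pne' h2), zero_mul])]
      show mustar n ε j (Fin.last (n+1), j) * c j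
          + mustar n ε j (Fin.last (n+1), Fin.last (n+1)) * c (Fin.last (n+1)) = _
      rw [mustar_mj hj, mustar_mm hj, if_neg (Ne.symm hj), if_pos rfl]
      ring
    · rw [Finset.sum_eq_zero (fun b _ => by
        rw [mustar_zero (a, b) (pne haj) (pne haj) (pne ham) (pne ham), zero_mul])]
      rw [if_neg haj, if_neg ham]
      ring

end Aux3

section Aux4
open Finset
variable {n : ℕ} {ε : ℝ} {j : Fin (n+2)}

lemma mustar_col_sum (hj : j ≠ Fin.last (n+1)) (b : Fin (n+2)) (c : Fin (n+2) → ℝ) :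
    ∑ a, mustar n ε j (a, b) * c a =
      ((1+ε)^2)⁻¹ * ((if b = j then c j + ε * c (Fin.last (n+1)) else 0) +
        (if b = Fin.last (n+1) then ε * c j + ε^2 * c (Fin.last (n+1)) else 0)) := by
  by_cases hbj : b = j
  · rw [hbj]
    rw [sum_two (fun a => mustar n ε j (a, j) * c a) j (Fin.last (n+1)) hj
      (fun a h1 h2 => by
        show mustar n ε j (a, j) * c a = 0
        rw [mustar_zero (a, j) (pne h1) (pne' hj) (pne h2) (pne' hj), zero_mul])]
    show mustar n ε j (j, j) * c j + mustar n ε j (Fin.last (n+1), j) * c (Fin.last (n+1)) = _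
    rw [mustar_jj hj, mustar_mj hj, if_pos rfl, if_neg hj]
    ring
  · by_cases hbm : b = Fin.last (n+1)
    · rw [hbm]
      rw [sum_two (fun a => mustar n ε j (a, Fin.last (n+1)) * c a) j (Fin.last (n+1)) hj
        (fun a h1 h2 => by
          show mustar n ε j (a, Fin.last (n+1)) * c a = 0
          rw [mustar_zero (a, Fin.last (n+1)) (pne' (Ne.symm hj)) (pne h1)
            (pne' (Ne.symm hj)) (pne h2), zero_mul])]
      show mustar n ε j (j, Fin.last (n+1)) * c j
          + mustar n ε j (Fin.last (n+1), Fin.last (n+1)) * c (Fin.last (n+1)) = _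
      rw [mustar_jm hj, mustar_mm hj, if_neg (Ne.symm hj), if_pos rfl]
      ring
    · rw [Finset.sum_eq_zero (fun a _ => by
        rw [mustar_zero (a, b) (pne' hbj) (pne' hbm) (pne' hbj) (pne' hbm), zero_mul])]
      rw [if_neg hbj, if_neg hbm]
      ring

lemma L1_mustar (hj : j ≠ Fin.last (n+1)) :
    ∑ b, mustar n ε j (j, b) * (Amat n ε j j b - Amat n ε j (Fin.last (n+1)) b) = 0 := by
  rw [mustar_row_sum hj j (fun b => Amat n ε j j b - Amat n ε j (Fin.last (n+1)) b)]
  rw [if_pos rfl, if_neg hj, Amat_jj hj, Amat_last, Amat_last,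
    Amat_off j (Fin.last (n+1)) hj (Ne.symm hj)]
  ring

lemma L2_mustar (hj : j ≠ Fin.last (n+1)) :
    ∑ a, mustar n ε j (a, j) * (Amat n ε j j a - Amat n ε j (Fin.last (n+1)) a) = 0 := by
  rw [mustar_col_sum hj j (fun a => Amat n ε j j a - Amat n ε j (Fin.last (n+1)) a)]
  rw [if_pos rfl, if_neg hj, Amat_jj hj, Amat_last, Amat_last,
    Amat_off j (Fin.last (n+1)) hj (Ne.symm hj)]
  ring

lemma L3_mustar (hj : j ≠ Fin.last (n+1)) :
    ∑ b, mustar n ε j (Fin.last (n+1), b) * (Amat n ε j (Fin.last (n+1)) b - Amat n ε j j b)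
      = 0 := by
  rw [mustar_row_sum hj (Fin.last (n+1))
    (fun b => Amat n ε j (Fin.last (n+1)) b - Amat n ε j j b)]
  rw [if_neg (Ne.symm hj), if_pos rfl, Amat_jj hj, Amat_last, Amat_last,
    Amat_off j (Fin.last (n+1)) hj (Ne.symm hj)]
  ring

lemma mustar_ce (hε : 0 < ε) (hj : j ≠ Fin.last (n+1)) : IsCE2 (Gk n ε j) (mustar n ε j) := by
  have hx : (0:ℝ) < ((1+ε)^2)⁻¹ := by positivity
  refine ⟨mustar_nonneg hε.le, mustar_sum hε.le, ?_, ?_⟩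
  · intro a a'
    show 0 ≤ ∑ b, mustar n ε j (a, b) * (Amat n ε j a b - Amat n ε j a' b)
    rw [mustar_row_sum hj a (fun b => Amat n ε j a b - Amat n ε j a' b)]
    by_cases haj : a = j
    · subst haj
      rw [if_pos rfl, if_neg hj, Amat_jj hj, Amat_off a (Fin.last (n+1)) hj (Ne.symm hj)]
      by_cases ha'j : a' = a
      · subst ha'j
        rw [Amat_jj hj, Amat_off a' (Fin.last (n+1)) hj (Ne.symm hj)]
        nlinarith
      · by_cases ha'm : a' = Fin.last (n+1)
        · subst ha'm; rw [Amat_last, Amat_last]; nlinarith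
        · rw [Amat_off a' a ha'm (Ne.symm ha'j),
            Amat_off a' (Fin.last (n+1)) ha'm (Ne.symm ha'm)]
          nlinarith
    · by_cases ham : a = Fin.last (n+1)
      · subst ham
        rw [if_neg haj, if_pos rfl, Amat_last, Amat_last]
        by_cases ha'j : a' = j
        · subst ha'j; rw [Amat_jj hj, Amat_off a' (Fin.last (n+1)) hj (Ne.symm hj)]; nlinarith
        · by_cases ha'm : a' = Fin.last (n+1)
          · subst ha'm; rw [Amat_last, Amat_last]; nlinarith
          · rw [Amat_off a' j ha'm (fun h => ha'j h.symm),
              Amat_off a' (Fin.last (n+1)) ha'm (Ne.symm ha'm)]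
            nlinarith
      · rw [if_neg haj, if_neg ham]; nlinarith
  · intro b b'
    show 0 ≤ ∑ a, mustar n ε j (a, b) * (Amat n ε j b a - Amat n ε j b' a)
    rw [mustar_col_sum hj b (fun a => Amat n ε j b a - Amat n ε j b' a)]
    by_cases hbj : b = j
    · subst hbj
      rw [if_pos rfl, if_neg hj, Amat_jj hj, Amat_off b (Fin.last (n+1)) hj (Ne.symm hj)]
      by_cases hb'j : b' = b
      · subst hb'j
        rw [Amat_jj hj, Amat_off b' (Fin.last (n+1)) hj (Ne.symm hj)]
        nlinarith
      · by_cases hb'm : b' = Fin.last (n+1)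
        · subst hb'm; rw [Amat_last, Amat_last]; nlinarith
        · rw [Amat_off b' b hb'm (Ne.symm hb'j),
            Amat_off b' (Fin.last (n+1)) hb'm (Ne.symm hb'm)]
          nlinarith
    · by_cases hbm : b = Fin.last (n+1)
      · subst hbm
        rw [if_neg hbj, if_pos rfl, Amat_last, Amat_last]
        by_cases hb'j : b' = j
        · subst hb'j; rw [Amat_jj hj, Amat_off b' (Fin.last (n+1)) hj (Ne.symm hj)]; nlinarith
        · by_cases hb'm : b' = Fin.last (n+1)
          · subst hb'm; rw [Amat_last, Amat_last]; nlinarith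
          · rw [Amat_off b' j hb'm (fun h => hb'j h.symm),
              Amat_off b' (Fin.last (n+1)) hb'm (Ne.symm hb'm)]
            nlinarith
      · rw [if_neg hbj, if_neg hbm]; nlinarith

end Aux4

section Aux5
open Finset
variable {n : ℕ} {ε : ℝ} {j : Fin (n+2)}

lemma pin (hε : 0 < ε) (hj : j ≠ Fin.last (n+1)) (ν : Fin (n+2) × Fin (n+2) → ℝ)
    (hsum : ∑ s, ν s = 1)
    (hz : ∀ s, s ≠ (j, j) → s ≠ (j, Fin.last (n+1)) → s ≠ (Fin.last (n+1), j) →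
      s ≠ (Fin.last (n+1), Fin.last (n+1)) → ν s = 0)
    (t1 : ∑ b, ν (j, b) * (Amat n ε j j b - Amat n ε j (Fin.last (n+1)) b) = 0)
    (t2 : ∑ a, ν (a, j) * (Amat n ε j j a - Amat n ε j (Fin.last (n+1)) a) = 0)
    (t3 : ∑ b, ν (Fin.last (n+1), b) *
      (Amat n ε j (Fin.last (n+1)) b - Amat n ε j j b) = 0) :
    ν = mustar n ε j := by
  have h1e : (0:ℝ) < 1 + ε := by linarith
  rw [sum_two (fun b => ν (j, b) * (Amat n ε j j b - Amat n ε j (Fin.last (n+1)) b))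
    j (Fin.last (n+1)) hj (fun b hb1 hb2 => by
      show ν (j, b) * _ = 0
      rw [hz (j, b) (pne' hb1) (pne' hb2) (pne hj) (pne hj), zero_mul])] at t1
  rw [sum_two (fun a => ν (a, j) * (Amat n ε j j a - Amat n ε j (Fin.last (n+1)) a))
    j (Fin.last (n+1)) hj (fun a ha1 ha2 => by
      show ν (a, j) * _ = 0
      rw [hz (a, j) (pne ha1) (pne' hj) (pne ha2) (pne' hj), zero_mul])] at t2
  rw [sum_two (fun b => ν (Fin.last (n+1), b) *
      (Amat n ε j (Fin.last (n+1)) b - Amat n ε j j b))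
    j (Fin.last (n+1)) hj (fun b hb1 hb2 => by
      show ν (Fin.last (n+1), b) * _ = 0
      rw [hz (Fin.last (n+1), b) (pne (Ne.symm hj)) (pne (Ne.symm hj)) (pne' hb1) (pne' hb2),
        zero_mul])] at t3
  rw [sum_four ν (j, j) (j, Fin.last (n+1)) (Fin.last (n+1), j)
    (Fin.last (n+1), Fin.last (n+1)) (pne' hj) (pne hj) (pne hj) (pne hj) (pne hj) (pne' hj)
    hz] at hsum
  simp only [Amat_jj hj, Amat_last, Amat_off j (Fin.last (n+1)) hj (Ne.symm hj)] at t1 t2 t3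
  -- t1 : ν (j,j) * (ε - 0) + ν (j,m) * (-1 - 0) = 0, etc.
  have vjj : ν (j, j) = ((1+ε)^2)⁻¹ := by
    have hmul : ν (j, j) * (1+ε)^2 = 1 := by linear_combination hsum + t1 + t2 + ε * t2 - t3
    have hne : ((1:ℝ)+ε)^2 ≠ 0 := by positivity
    field_simp
    linarith [hmul]
  have vjm : ν (j, Fin.last (n+1)) = ((1+ε)^2)⁻¹ * ε := by
    rw [← vjj]; linarith
  have vmj : ν (Fin.last (n+1), j) = ((1+ε)^2)⁻¹ * ε := by
    rw [← vjj]; linarith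
  have vmm : ν (Fin.last (n+1), Fin.last (n+1)) = ((1+ε)^2)⁻¹ * ε^2 := by
    have : ν (Fin.last (n+1), Fin.last (n+1)) = ε * ν (Fin.last (n+1), j) := by linarith
    rw [this, vmj]; ring
  funext s
  by_cases h1 : s = (j, j)
  · rw [h1, vjj, mustar_jj hj]
  · by_cases h2 : s = (j, Fin.last (n+1))
    · rw [h2, vjm, mustar_jm hj]
    · by_cases h3 : s = (Fin.last (n+1), j)
      · rw [h3, vmj, mustar_mj hj]
      · by_cases h4 : s = (Fin.last (n+1), Fin.last (n+1))
        · rw [h4, vmm, mustar_mm hj]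
        · rw [hz s h1 h2 h3 h4, mustar_zero s h1 h2 h3 h4]

lemma mustar_extreme (hε : 0 < ε) (hj : j ≠ Fin.last (n+1)) :
    mustar n ε j ∈ Set.extremePoints ℝ {μ | IsCE2 (Gk n ε j) μ} := by
  refine ⟨mustar_ce hε hj, ?_⟩
  intro μ₁ h₁ μ₂ h₂ hseg
  obtain ⟨a, b, ha, hb, hab, H⟩ := hseg
  have Hpt : ∀ s, a * μ₁ s + b * μ₂ s = mustar n ε j s := by
    intro s
    have := congrFun H s
    simpa using this
  have hz : ∀ s, s ≠ (j, j) → s ≠ (j, Fin.last (n+1)) → s ≠ (Fin.last (n+1), j) →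
      s ≠ (Fin.last (n+1), Fin.last (n+1)) → μ₁ s = 0 ∧ μ₂ s = 0 := by
    intro s e1 e2 e3 e4
    have h0 := Hpt s
    rw [mustar_zero s e1 e2 e3 e4] at h0
    have n1 := h₁.1 s
    have n2 := h₂.1 s
    constructor <;> nlinarith
  have key : ∀ (g : Fin (n+2) → Fin (n+2) × Fin (n+2)) (c : Fin (n+2) → ℝ),
      0 ≤ ∑ i, μ₁ (g i) * c i → 0 ≤ ∑ i, μ₂ (g i) * c i →
      (∑ i, mustar n ε j (g i) * c i = 0) →
      (∑ i, μ₁ (g i) * c i = 0) ∧ (∑ i, μ₂ (g i) * c i = 0) := by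
    intro g c hL1 hL2 hL0
    have hcomb : a * (∑ i, μ₁ (g i) * c i) + b * (∑ i, μ₂ (g i) * c i) = 0 := by
      rw [Finset.mul_sum, Finset.mul_sum, ← Finset.sum_add_distrib, ← hL0]
      refine Finset.sum_congr rfl (fun i _ => ?_)
      rw [← Hpt (g i)]; ring
    constructor <;> nlinarith
  have T1 := key (fun b' => (j, b')) (fun b' => Amat n ε j j b' - Amat n ε j (Fin.last (n+1)) b')
    (h₁.2.2.1 j (Fin.last (n+1))) (h₂.2.2.1 j (Fin.last (n+1))) (L1_mustar hj)
  have T2 := key (fun a' => (a', j)) (fun a' => Amat n ε j j a' - Amat n ε j (Fin.last (n+1)) a')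
    (h₁.2.2.2 j (Fin.last (n+1))) (h₂.2.2.2 j (Fin.last (n+1))) (L2_mustar hj)
  have T3 := key (fun b' => (Fin.last (n+1), b'))
    (fun b' => Amat n ε j (Fin.last (n+1)) b' - Amat n ε j j b')
    (h₁.2.2.1 (Fin.last (n+1)) j) (h₂.2.2.1 (Fin.last (n+1)) j) (L3_mustar hj)
  exact pin hε hj μ₁ h₁.2.1 (fun s e1 e2 e3 e4 => (hz s e1 e2 e3 e4).1) T1.1 T2.1 T3.1

end Aux5

section Aux6
open Finset
variable {n : ℕ} {ε : ℝ} {j : Fin (n+2)}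

lemma dirac_diag_inj : Function.Injective (fun i : Fin (n+2) => dirac (i, i)) := by
  intro i i' h
  have := dirac_injective h
  exact (Prod.ext_iff.mp this).1

lemma hasExactly0 (j : Fin (n+2)) : HasExactlyExtremeCE (Gk n 0 j) (n+2) := by
  classical
  refine ⟨Finset.univ.image (fun i : Fin (n+2) => dirac (i, i)), ?_, ?_⟩
  · rw [Finset.card_image_of_injective _ dirac_diag_inj, Finset.card_univ, Fintype.card_fin]
  · rw [Finset.coe_image, Finset.coe_univ, Set.image_univ, extreme0 j]

lemma gk_cont (j : Fin (n+2)) : Continuous (fun ε : ℝ => Gk n ε j) := by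
  have hent : ∀ a b : Fin (n+2), Continuous (fun ε : ℝ => Amat n ε j a b) := by
    intro a b
    unfold Amat
    by_cases h1 : a = Fin.last (n+1)
    · simp only [if_pos h1]; exact continuous_const
    · simp only [if_neg h1]
      by_cases h2 : b = a
      · simp only [if_pos h2]
        by_cases h3 : a = j
        · simp only [if_pos h3]; exact continuous_id
        · simp only [if_neg h3]; exact continuous_const
      · simp only [if_neg h2]; exact continuous_const
  unfold Gk
  exact Continuous.prodMk (continuous_pi fun a => continuous_pi fun b => hent a b)
    (continuous_pi fun a => continuous_pi fun b => hent b a)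

lemma mustar_ne_dirac (hε : 0 < ε) (hj : j ≠ Fin.last (n+1)) (i : Fin (n+2)) :
    mustar n ε j ≠ dirac (i, i) := by
  intro h
  have hx : (0:ℝ) < ((1+ε)^2)⁻¹ := by positivity
  have h1 := congrFun h (j, Fin.last (n+1))
  rw [mustar_jm hj] at h1
  have h2 : dirac (i, i) (j, Fin.last (n+1)) = 0 := by
    refine if_neg (fun hh => ?_)
    exact hj ((Prod.ext_iff.mp hh).1.trans (Prod.ext_iff.mp hh).2.symm)
  rw [h2] at h1
  nlinarith

lemma perturbed_big (hε : 0 < ε) (hj : j ≠ Fin.last (n+1)) :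
    ∃ E : Finset (Fin (n+2) × Fin (n+2) → ℝ), (n+2) < E.card ∧
      (E : Set (Fin (n+2) × Fin (n+2) → ℝ)) ⊆
        Set.extremePoints ℝ {μ | IsCE2 (Gk n ε j) μ} := by
  classical
  refine ⟨insert (mustar n ε j) (Finset.univ.image (fun i : Fin (n+2) => dirac (i, i))),
    ?_, ?_⟩
  · rw [Finset.card_insert_of_notMem (by
        simp only [Finset.mem_image, Finset.mem_univ, true_and]
        rintro ⟨i, hi⟩
        exact mustar_ne_dirac hε hj i hi.symm),
      Finset.card_image_of_injective _ dirac_diag_inj, Finset.card_univ, Fintype.card_fin]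
    omega
  · intro μ hμ
    simp only [Finset.coe_insert, Set.mem_insert_iff, Finset.coe_image, Finset.coe_univ,
      Set.image_univ, Set.mem_range] at hμ
    rcases hμ with rfl | ⟨i, rfl⟩
    · exact mustar_extreme hε hj
    · exact dirac_diag_extreme hε.le i

lemma g3e_eq (ε : ℝ) : G3e ε = Gk 1 ε 1 := by
  unfold G3e Gk Amat
  refine Prod.ext ?_ ?_ <;> funext a b <;> fin_cases a <;> fin_cases b <;>
    norm_num [Matrix.cons_val_zero, Matrix.cons_val_one, Matrix.head_cons, Fin.ext_iff,
      Matrix.cons_val_fin_one, Matrix.cons_val_succ, Fin.last]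

end Aux6


/-- for every `k ≥ 2`, the set of `k × k` bimatrix games whose correlated
equilibrium polytope has exactly `k` extreme points is not open: some game `G` with exactly
`k` extreme correlated equilibria has, in each of its neighborhoods, a game with strictly more
than `k` extreme correlated equilibria. In particular, for `k = 3`, the extreme correlated
equilibria of `G3e 0` are exactly the three pure diagonal profiles, while for every
sufficiently small `ε > 0` the game `G3e ε` has at least four extreme correlated equilibria. -/
theorem statement11 :
    (∀ k : ℕ, 2 ≤ k → ∃ G : BiGame k, HasExactlyExtremeCE G k ∧
      ∀ U ∈ nhds G, ∃ G' ∈ U, ∃ E : Finset (Fin k × Fin k → ℝ),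
        k < E.card ∧ (E : Set (Fin k × Fin k → ℝ)) ⊆ Set.extremePoints ℝ {μ | IsCE2 G' μ}) ∧
    (Set.extremePoints ℝ {μ | IsCE2 (G3e 0) μ} =
      {dirac (0, 0), dirac (1, 1), dirac (2, 2)}) ∧
    (∃ δ : ℝ, 0 < δ ∧ ∀ ε : ℝ, 0 < ε → ε < δ →
      ∃ E : Finset (Fin 3 × Fin 3 → ℝ), 4 ≤ E.card ∧
        (E : Set (Fin 3 × Fin 3 → ℝ)) ⊆ Set.extremePoints ℝ {μ | IsCE2 (G3e ε) μ}) := by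
  have hj3 : (1 : Fin 3) ≠ Fin.last 2 := by decide
  refine ⟨?_, ?_, ?_⟩
  · -- part 1
    intro k hk
    obtain ⟨n, rfl⟩ : ∃ n, k = n + 2 := ⟨k - 2, by omega⟩
    have hj : (0 : Fin (n+2)) ≠ Fin.last (n+1) := by
      simp only [Ne, Fin.ext_iff, Fin.val_zero, Fin.val_last]
      omega
    refine ⟨Gk n 0 0, hasExactly0 0, ?_⟩
    intro U hU
    have hV : (fun ε : ℝ => Gk n ε 0) ⁻¹' U ∈ nhds (0 : ℝ) :=
      (gk_cont 0).continuousAt.preimage_mem_nhds hU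
    obtain ⟨δ, hδpos, hball⟩ := Metric.mem_nhds_iff.mp hV
    have hmem : Gk n (δ/2) 0 ∈ U := by
      apply hball
      rw [Metric.mem_ball, Real.dist_eq, sub_zero, abs_of_pos (by linarith)]
      linarith
    obtain ⟨E, hE1, hE2⟩ := perturbed_big (n := n) (ε := δ/2) (by linarith) hj
    exact ⟨Gk n (δ/2) 0, hmem, E, hE1, hE2⟩
  · -- part 2
    rw [g3e_eq 0, extreme0 (n := 1) 1]
    ext μ
    simp only [Set.mem_range, Set.mem_insert_iff, Set.mem_singleton_iff]
    constructor
    · rintro ⟨i, rfl⟩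
      fin_cases i
      · exact Or.inl rfl
      · exact Or.inr (Or.inl rfl)
      · exact Or.inr (Or.inr rfl)
    · rintro (rfl | rfl | rfl)
      exacts [⟨0, rfl⟩, ⟨1, rfl⟩, ⟨2, rfl⟩]
  · -- part 3
    classical
    refine ⟨1, one_pos, ?_⟩
    intro ε hε _
    have hne : ∀ i : Fin 3, mustar 1 ε 1 ≠ dirac (i, i) := mustar_ne_dirac hε hj3
    refine ⟨insert (mustar 1 ε 1)
      ({dirac (0, 0), dirac (1, 1), dirac (2, 2)} : Finset (Fin 3 × Fin 3 → ℝ)), ?_, ?_⟩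
    · have c1 : dirac ((0 : Fin 3), (0 : Fin 3)) ∉
          ({dirac (1, 1), dirac (2, 2)} : Finset (Fin 3 × Fin 3 → ℝ)) := by
        simp only [Finset.mem_insert, Finset.mem_singleton]
        push_neg
        exact ⟨dirac_injective.ne (by decide), dirac_injective.ne (by decide)⟩
      have c2 : dirac ((1 : Fin 3), (1 : Fin 3)) ∉
          ({dirac (2, 2)} : Finset (Fin 3 × Fin 3 → ℝ)) := by
        simp only [Finset.mem_singleton]
        exact dirac_injective.ne (by decide)
      have c0 : mustar 1 ε 1 ∉
          ({dirac (0, 0), dirac (1, 1), dirac (2, 2)} : Finset (Fin 3 × Fin 3 → ℝ)) := by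
        simp only [Finset.mem_insert, Finset.mem_singleton]
        push_neg
        exact ⟨hne 0, hne 1, hne 2⟩
      rw [Finset.card_insert_of_notMem c0, Finset.card_insert_of_notMem c1,
        Finset.card_insert_of_notMem c2, Finset.card_singleton]
    · intro μ hμ
      rw [g3e_eq ε]
      simp only [Finset.coe_insert, Set.mem_insert_iff, Finset.coe_singleton,
        Set.mem_singleton_iff] at hμ
      rcases hμ with rfl | rfl | rfl | rfl
      · exact mustar_extreme hε hj3
      · exact dirac_diag_extreme (j := 1) hε.le 0
      · exact dirac_diag_extreme (j := 1) hε.le 1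
      · exact dirac_diag_extreme (j := 1) hε.le 2
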